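/- (Gilbert–Varshamov bound.) Let H(δ) = −δ log₂ δ − (1−δ) log₂(1−δ) be the binary entropy function. For every 0 ≤ δ < 1/2 and every 0 < ε ≤ 1 − H(δ), and for every positive integer k such that m = ⌊(1 − H(δ) − ε)·k⌋ ≥ 1, there exists a binary linear code of length k and dimension m (a linear subspace of F₂^k of dimension m) whose minimum Hamming weight over nonzero codewords is at least δ·k. -/

import Mathlib

open Finset Real

/-- The binary entropy function with logarithm base 2. -/
noncomputable def binEnt (δ : ℝ) : ℝ :=
  -δ * Real.logb 2 δ - (1 - δ) * Real.logb 2 (1 - δ)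

/-!
Varshamov's greedy construction. If every nonzero word of a linear code `C ⊆ F^ι` has weight
`> t` and `|C| · V(t) < |F^ι|`, where `V(t)` is the size of a Hamming ball of radius `t`, some `x`
lies at distance `> t` from every codeword, and `C ⊔ span {x}` keeps the property with one more
dimension; so a code of dimension `m` exists as soon as `|F|^m · V(t) ≤ |F^ι|`.

In the binary case `V(⌊δk⌋) ≤ 2^(H(δ) k)` for `δ ≤ 1/2`: every term `δ^j (1-δ)^(k-j)` with
`j ≤ δk` of the expansion of `(δ + (1 - δ))^k = 1` is at least `2^(-H(δ) k)`. Hence, with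
`t = ⌊δk⌋`, the construction reaches every dimension `m ≤ (1 - H(δ)) k`.
-/

open Module
open scoped Pointwise

def hammingBall {ι β : Type*} [Fintype ι] [DecidableEq ι] [Fintype β] [Zero β] [DecidableEq β]
    (t : ℕ) : Finset (ι → β) :=
  {w | hammingNorm w ≤ t}

section Greedy

variable {F ι : Type*} [Field F] [Fintype F] [DecidableEq F] [Fintype ι] [DecidableEq ι]

theorem exists_finrank_succ_forall_lt_hammingNorm {C : Submodule F (ι → F)} {t : ℕ}
    (hC : ∀ c ∈ C, c ≠ 0 → t < hammingNorm c)
    (hcard : Fintype.card F ^ finrank F C * #(hammingBall t : Finset (ι → F)) <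
      Fintype.card F ^ Fintype.card ι) :
    ∃ C' : Submodule F (ι → F), finrank F C' = finrank F C + 1 ∧
      ∀ c ∈ C', c ≠ 0 → t < hammingNorm c := by
  classical
  obtain ⟨x, -, hx⟩ : ∃ x ∈ univ, x ∉ (C : Set (ι → F)).toFinset + hammingBall t := by
    refine exists_mem_notMem_of_card_lt_card (card_add_le.trans_lt ?_)
    rw [Set.toFinset_card, card_univ, Fintype.card_fun]
    rwa [← Module.card_eq_pow_finrank] at hcard
  have hfar : ∀ b ∈ C, t < hammingNorm (x - b) := by
    intro b hb
    by_contra! h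
    exact hx (mem_add.mpr
      ⟨b, by simpa using hb, x - b, by simpa [hammingBall] using h, add_sub_cancel b x⟩)
  have hxC : x ∉ C := fun hxC => by simpa using hfar x hxC
  refine ⟨C ⊔ Submodule.span F {x}, Submodule.finrank_sup_span_singleton hxC, ?_⟩
  intro c hc hc0
  obtain ⟨b, hb, _, hy, rfl⟩ := Submodule.mem_sup.mp hc
  obtain ⟨a, rfl⟩ := Submodule.mem_span_singleton.mp hy
  rcases eq_or_ne a 0 with rfl | ha
  · simp only [zero_smul, add_zero] at hc0 ⊢
    exact hC b hb hc0
  · have : b + a • x = a • (x - (-a⁻¹) • b) := by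
      rw [smul_sub, smul_smul, mul_neg, mul_inv_cancel₀ ha]; module
    rw [this, hammingNorm_smul fun _ => IsSMulRegular.of_ne_zero ha]
    exact hfar _ (C.smul_mem _ hb)

theorem exists_finrank_eq_forall_lt_hammingNorm {t m : ℕ}
    (h : Fintype.card F ^ m * #(hammingBall t : Finset (ι → F)) ≤
      Fintype.card F ^ Fintype.card ι) :
    ∃ C : Submodule F (ι → F), finrank F C = m ∧ ∀ c ∈ C, c ≠ 0 → t < hammingNorm c := by
  induction m with
  | zero => exact ⟨⊥, finrank_bot F _, by simp⟩
  | succ m ih =>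
    have hball_pos : 0 < #(hammingBall t : Finset (ι → F)) :=
      card_pos.mpr ⟨0, by simp [hammingBall]⟩
    have hlt : Fintype.card F ^ m * #(hammingBall t : Finset (ι → F)) <
        Fintype.card F ^ Fintype.card ι := by
      refine lt_of_lt_of_le ?_ h
      gcongr
      · exact Fintype.one_lt_card
      · omega
    obtain ⟨C, rfl, hC⟩ := ih hlt.le
    exact exists_finrank_succ_forall_lt_hammingNorm hC hlt

end Greedy

section Binary

variable {ι : Type*} [Fintype ι] [DecidableEq ι]

theorem card_filter_hammingNorm_eq_choose (j : ℕ) :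
    #{w : ι → ZMod 2 | hammingNorm w = j} = (Fintype.card ι).choose j := by
  rw [← card_univ, ← card_powersetCard]
  refine card_nbij' (fun w => ({i | w i ≠ 0} : Finset ι)) (fun s i => if i ∈ s then 1 else 0)
    ?_ ?_ ?_ ?_
  · intro w hw
    simp_all [hammingNorm]
  · intro s hs
    simp_all [hammingNorm]
  · intro w _
    funext i
    simp only [mem_filter, mem_univ, true_and]
    generalize w i = a
    revert a
    decide
  · intro s _
    ext i
    by_cases h : i ∈ s <;> simp [h]

theorem card_hammingBall_zmod_two (t : ℕ) :
    #(hammingBall t : Finset (ι → ZMod 2)) = ∑ j ∈ range (t + 1), (Fintype.card ι).choose j := by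
  rw [card_eq_sum_card_fiberwise (f := hammingNorm) (t := range (t + 1))]
  · refine sum_congr rfl fun j hj => ?_
    rw [hammingBall, filter_filter, ← card_filter_hammingNorm_eq_choose]
    congr 1
    ext w
    simp only [mem_filter, mem_univ, true_and, and_iff_right_iff_imp]
    rintro rfl
    exact Nat.lt_succ_iff.mp (mem_range.mp hj)
  · intro w hw
    simpa [hammingBall, Nat.lt_succ_iff] using hw

end Binary

theorem binEnt_mul_log_two (p : ℝ) : binEnt p * log 2 = binEntropy p := by
  have : log 2 ≠ 0 := (log_pos one_lt_two).ne'
  simp only [binEnt, binEntropy, logb, log_inv]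
  field_simp
  ring

theorem two_rpow_binEnt_mul (p x : ℝ) : (2 : ℝ) ^ (binEnt p * x) = exp (binEntropy p * x) := by
  rw [rpow_def_of_pos two_pos, ← binEnt_mul_log_two]
  ring_nf

theorem exp_neg_binEntropy_mul_le_pow_mul_pow {p : ℝ} (hp0 : 0 ≤ p) (hp : p ≤ 1 / 2) {n j : ℕ}
    (hjn : j ≤ n) (hj : (j : ℝ) ≤ p * n) :
    exp (-(binEntropy p * n)) ≤ p ^ j * (1 - p) ^ (n - j) := by
  rcases hp0.eq_or_lt with rfl | hp0
  · obtain rfl : j = 0 := by exact_mod_cast le_antisymm (by simpa using hj) j.cast_nonneg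
    simp
  have hq : 0 < 1 - p := by linarith
  have hlog : log p ≤ log (1 - p) := log_le_log hp0 (by linarith)
  rw [← exp_log (by positivity : 0 < p ^ j * (1 - p) ^ (n - j)), exp_le_exp,
    log_mul (by positivity) (by positivity), log_pow, log_pow, Nat.cast_sub hjn, binEntropy,
    log_inv, log_inv]
  nlinarith [mul_nonneg (sub_nonneg.mpr hj) (sub_nonneg.mpr hlog)]

theorem sum_range_choose_le_exp_binEntropy_mul {p : ℝ} (hp0 : 0 ≤ p) (hp : p ≤ 1 / 2) (n : ℕ) :
    ∑ j ∈ range (⌊p * n⌋₊ + 1), (n.choose j : ℝ) ≤ exp (binEntropy p * n) := by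
  set t := ⌊p * n⌋₊
  have htn : t ≤ n := Nat.floor_le_of_le (by nlinarith [(n.cast_nonneg : (0 : ℝ) ≤ n)])
  have key : (∑ j ∈ range (t + 1), (n.choose j : ℝ)) * exp (-(binEntropy p * n)) ≤ 1 :=
    calc (∑ j ∈ range (t + 1), (n.choose j : ℝ)) * exp (-(binEntropy p * n))
        ≤ ∑ j ∈ range (t + 1), p ^ j * (1 - p) ^ (n - j) * n.choose j := by
          rw [sum_mul]
          refine sum_le_sum fun j hj => ?_
          rw [mul_comm]
          have hjt : j ≤ t := Nat.lt_succ_iff.mp (mem_range.mp hj)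
          gcongr
          exact exp_neg_binEntropy_mul_le_pow_mul_pow hp0 hp (hjt.trans htn)
            ((Nat.cast_le.mpr hjt).trans (Nat.floor_le (by positivity)))
      _ ≤ ∑ j ∈ range (n + 1), p ^ j * (1 - p) ^ (n - j) * n.choose j := by
          gcongr
          · intro j _ _
            have : 0 ≤ 1 - p := by linarith
            positivity
      _ = 1 := by rw [← add_pow, add_sub_cancel, one_pow]
  rwa [exp_neg, ← div_eq_mul_inv, div_le_one (exp_pos _)] at key

theorem gilbert_varshamov_general (δ ε : ℝ) (hδ0 : 0 ≤ δ) (hδ : δ < 1 / 2)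
    (hε0 : 0 < ε)
    (k : ℕ) (m : ℕ) (hm : m = ⌊(1 - binEnt δ - ε) * (k : ℝ)⌋₊) (hm1 : 1 ≤ m) :
    ∃ B : Submodule (ZMod 2) (Fin k → ZMod 2),
      Module.finrank (ZMod 2) B = m ∧
      ∀ c ∈ B, c ≠ 0 → δ * (k : ℝ) ≤ (hammingNorm c : ℝ) := by
  have hmk : (m : ℝ) ≤ (1 - binEnt δ - ε) * k :=
    (Nat.le_floor_iff' (by omega)).mp hm.le
  have hball : (2 : ℝ) ^ m * #(hammingBall ⌊δ * k⌋₊ : Finset (Fin k → ZMod 2)) ≤ 2 ^ k :=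
    calc (2 : ℝ) ^ m * #(hammingBall ⌊δ * k⌋₊ : Finset (Fin k → ZMod 2))
        ≤ 2 ^ (m : ℝ) * 2 ^ (binEnt δ * k) := by
          rw [card_hammingBall_zmod_two, Fintype.card_fin, two_rpow_binEnt_mul, rpow_natCast]
          push_cast
          gcongr
          exact sum_range_choose_le_exp_binEntropy_mul hδ0 hδ.le k
      _ = 2 ^ ((m : ℝ) + binEnt δ * k) := (rpow_add two_pos _ _).symm
      _ ≤ 2 ^ (k : ℝ) := by
          gcongr
          · norm_num
          · linarith [mul_nonneg hε0.le (k.cast_nonneg (α := ℝ))]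
      _ = 2 ^ k := rpow_natCast 2 k
  obtain ⟨B, hBm, hB⟩ := exists_finrank_eq_forall_lt_hammingNorm (F := ZMod 2) (ι := Fin k)
    (t := ⌊δ * k⌋₊) (m := m) (by rw [ZMod.card, Fintype.card_fin]; exact_mod_cast hball)
  refine ⟨B, hBm, fun c hc hc0 => (Nat.lt_floor_add_one _).le.trans ?_⟩
  exact_mod_cast hB c hc hc0

/-- Gilbert–Varshamov bound: for every `0 ≤ δ < 1/2` and
`0 < ε ≤ 1 − H(δ)`, and every length `k` with `m = ⌊(1 − H(δ) − ε)·k⌋ ≥ 1`, there exists a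
binary linear code of length `k` and dimension `m` all of whose nonzero codewords have Hamming
weight at least `δ·k`. -/
theorem gilbert_varshamov (δ ε : ℝ) (hδ0 : 0 ≤ δ) (hδ : δ < 1 / 2)
    (hε0 : 0 < ε) (hε : ε ≤ 1 - binEnt δ)
    (k : ℕ) (hk : 0 < k) (m : ℕ) (hm : m = ⌊(1 - binEnt δ - ε) * (k : ℝ)⌋₊) (hm1 : 1 ≤ m) :
    ∃ B : Submodule (ZMod 2) (Fin k → ZMod 2),
      Module.finrank (ZMod 2) B = m ∧
      ∀ c ∈ B, c ≠ 0 → δ * (k : ℝ) ≤ (hammingNorm c : ℝ) :=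
  gilbert_varshamov_general δ ε hδ0 hδ hε0 k m hm hm1
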